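/- arXiv:2507.16577 — 3 statements merged into one kernel-verified Lean document; each statement's English description precedes it below -/
import Mathlib

section
/- If x satisfies x·w > k_th with ‖x‖² = d and k_th ∈ (0, √d·‖w‖), then the angle θ between x and w satisfies cos θ > k_th/(√d·‖w‖); consequently any two vectors x_r, x_s both satisfying this condition have inner product x_r·x_s > d·cos(2θ*), where θ* = arccos(k_th/(√d·‖w‖)). -/
/-!
The threshold `x ⬝ w > k_th` confines every admissible `x` to the open cone of half-angle
`θ* = arccos (k_th / (√d ‖w‖))` around `w`. By the triangle inequality for angles, two such
vectors make an angle less than `2θ*`, and `2θ* ≤ π` because `k_th > 0`; as cosine decreases on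
`[0, π]` and both vectors have norm `√d`, their inner product exceeds `d cos (2θ*)`.
-/

open InnerProductGeometry Real
open scoped RealInnerProductSpace

namespace InnerProductGeometry

variable {V : Type*} [NormedAddCommGroup V] [InnerProductSpace ℝ V]

lemma div_norm_mul_norm_lt_cos_angle {x w : V} {k : ℝ} (hk : 0 ≤ k) (h : k < ⟪x, w⟫) :
    k / (‖x‖ * ‖w‖) < cos (angle x w) := by
  have hpos : 0 < ‖x‖ * ‖w‖ := (hk.trans_lt h).trans_le (real_inner_le_norm x w)
  rw [cos_angle]
  gcongr

lemma angle_lt_arccos_of_lt_cos_angle {x y : V} {c : ℝ} (hc : -1 ≤ c)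
    (h : c < cos (angle x y)) : angle x y < arccos c := by
  rw [← arccos_cos (angle_nonneg x y) (angle_le_pi x y)]
  exact arccos_lt_arccos hc h (cos_le_one _)

lemma norm_mul_norm_mul_cos_two_mul_lt_inner {x y w : V} {θ : ℝ} (hx : x ≠ 0) (hy : y ≠ 0)
    (hθ : θ ≤ π / 2) (hxw : angle x w < θ) (hyw : angle y w < θ) :
    ‖x‖ * ‖y‖ * cos (2 * θ) < ⟪x, y⟫ := by
  have hxy : angle x y < 2 * θ :=
    calc angle x y ≤ angle x w + angle w y := angle_le_angle_add_angle x w y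
      _ < 2 * θ := by rw [angle_comm w y]; linarith
  have hcos : cos (2 * θ) < cos (angle x y) :=
    cos_lt_cos_of_nonneg_of_le_pi (angle_nonneg x y) (by linarith) hxy
  have hnorm : 0 < ‖x‖ * ‖y‖ := mul_pos (norm_pos_iff.2 hx) (norm_pos_iff.2 hy)
  rw [← cos_angle_mul_norm_mul_norm, mul_comm (cos _)]
  exact mul_lt_mul_of_pos_left hcos hnorm

end InnerProductGeometry

theorem stmt_0_general (d : ℕ) (w : EuclideanSpace ℝ (Fin d))
    (kth : ℝ) (hk0 : 0 < kth) :
    (∀ x : EuclideanSpace ℝ (Fin d), ‖x‖ ^ 2 = (d : ℝ) →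
      kth < (inner ℝ x w : ℝ) →
      kth / (Real.sqrt d * ‖w‖) < Real.cos (angle x w)) ∧
    (∀ xr xs : EuclideanSpace ℝ (Fin d), ‖xr‖ ^ 2 = (d : ℝ) → ‖xs‖ ^ 2 = (d : ℝ) →
      kth < (inner ℝ xr w : ℝ) → kth < (inner ℝ xs w : ℝ) →
      (d : ℝ) * Real.cos (2 * Real.arccos (kth / (Real.sqrt d * ‖w‖))) <
        (inner ℝ xr xs : ℝ)) := by
  have hnorm (x : EuclideanSpace ℝ (Fin d)) (hx : ‖x‖ ^ 2 = d) : ‖x‖ = √d := by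
    rw [← hx, sqrt_sq (norm_nonneg x)]
  have hcos (x : EuclideanSpace ℝ (Fin d)) (hx : ‖x‖ ^ 2 = d) (h : kth < ⟪x, w⟫) :
      kth / (√d * ‖w‖) < cos (angle x w) := by
    rw [← hnorm x hx]
    exact div_norm_mul_norm_lt_cos_angle hk0.le h
  have hne (x : EuclideanSpace ℝ (Fin d)) (h : kth < ⟪x, w⟫) : x ≠ 0 := by
    rintro rfl
    simp only [inner_zero_left] at h
    linarith
  refine ⟨hcos, fun xr xs hr hs hrw hsw => ?_⟩
  have hc : 0 ≤ kth / (√d * ‖w‖) := by positivity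
  have hangle (x : EuclideanSpace ℝ (Fin d)) (hx : ‖x‖ ^ 2 = d) (h : kth < ⟪x, w⟫) :
      angle x w < arccos (kth / (√d * ‖w‖)) :=
    angle_lt_arccos_of_lt_cos_angle (by linarith) (hcos x hx h)
  have key := norm_mul_norm_mul_cos_two_mul_lt_inner (hne xr hrw) (hne xs hsw)
    (arccos_le_pi_div_two.2 hc) (hangle xr hr hrw) (hangle xs hs hsw)
  rwa [hnorm xr hr, hnorm xs hs, mul_self_sqrt (Nat.cast_nonneg d)] at key

theorem stmt_0 (d : ℕ) (hd : 0 < d) (w : EuclideanSpace ℝ (Fin d)) (hw : w ≠ 0)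
    (kth : ℝ) (hk0 : 0 < kth) (hk1 : kth < Real.sqrt d * ‖w‖) :
    (∀ x : EuclideanSpace ℝ (Fin d), ‖x‖ ^ 2 = (d : ℝ) →
      kth < (inner ℝ x w : ℝ) →
      kth / (Real.sqrt d * ‖w‖) < Real.cos (angle x w)) ∧
    (∀ xr xs : EuclideanSpace ℝ (Fin d), ‖xr‖ ^ 2 = (d : ℝ) → ‖xs‖ ^ 2 = (d : ℝ) →
      kth < (inner ℝ xr w : ℝ) → kth < (inner ℝ xs w : ℝ) →
      (d : ℝ) * Real.cos (2 * Real.arccos (kth / (Real.sqrt d * ‖w‖))) <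
        (inner ℝ xr xs : ℝ)) :=
  stmt_0_general d w kth hk0
end

section
/- Let w₁, w₂ ∈ ℝ^d be nonzero with angle r between them, and suppose the classification thresholds are chosen so that the class half-angles satisfy θ¹, θ² < r/4, where θⁱ = arccos(k_th^i/(√d·‖wᵢ‖)). Then for any x_r in class 1 (i.e., x_r·w₁ > k_th¹, ‖x_r‖² = d) and x_s in class 2 (x_s·w₂ > k_th², ‖x_s‖² = d), we have x_r·x_s ≤ d·cos(2θ*) where θ* = max(θ¹, θ²). -/
/-!
A point of class `i` lies within angle `θᵢ` of `wᵢ`, because its inner product with `wᵢ` exceeds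
the threshold. By the triangle inequality for angles, two points of different classes are then at
angle at least `∠(w₁, w₂) - θ₁ - θ₂ > 4θ* - 2θ* = 2θ*`, and the cosine is antitone on `[0, π]`.
-/

open InnerProductGeometry Real

namespace InnerProductGeometry

variable {V : Type*} [NormedAddCommGroup V] [InnerProductSpace ℝ V]

theorem angle_le_arccos_of_le_inner {x w : V} {k : ℝ} (h : k ≤ inner ℝ x w) :
    angle x w ≤ arccos (k / (‖x‖ * ‖w‖)) :=
  arccos_le_arccos (div_le_div_of_nonneg_right h (by positivity))

theorem angle_le_angle_add_angle_add_angle (w₁ w₂ x y : V) :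
    angle w₁ w₂ ≤ angle x w₁ + angle x y + angle y w₂ := by
  have h₁ := angle_le_angle_add_angle w₁ x w₂
  have h₂ := angle_le_angle_add_angle x y w₂
  linarith [angle_comm w₁ x]

theorem inner_le_norm_mul_norm_mul_cos_of_le_angle {x y : V} {t : ℝ} (ht : 0 ≤ t)
    (h : t ≤ angle x y) : inner ℝ x y ≤ ‖x‖ * ‖y‖ * cos t := by
  rw [← cos_angle_mul_norm_mul_norm, mul_comm]
  exact mul_le_mul_of_nonneg_left (cos_le_cos_of_nonneg_of_le_pi ht (angle_le_pi x y) h)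
    (by positivity)

end InnerProductGeometry

theorem stmt_1_general (d : ℕ) (w₁ w₂ : EuclideanSpace ℝ (Fin d))
    (kth₁ kth₂ : ℝ)
    (θ₁ θ₂ : ℝ)
    (hθ₁ : θ₁ = Real.arccos (kth₁ / (Real.sqrt d * ‖w₁‖)))
    (hθ₂ : θ₂ = Real.arccos (kth₂ / (Real.sqrt d * ‖w₂‖)))
    (hr₁ : θ₁ < angle w₁ w₂ / 4) (hr₂ : θ₂ < angle w₁ w₂ / 4) :
    ∀ xr xs : EuclideanSpace ℝ (Fin d),
      ‖xr‖ ^ 2 = (d : ℝ) → ‖xs‖ ^ 2 = (d : ℝ) →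
      kth₁ < (inner ℝ xr w₁ : ℝ) → kth₂ < (inner ℝ xs w₂ : ℝ) →
      (inner ℝ xr xs : ℝ) ≤ (d : ℝ) * Real.cos (2 * max θ₁ θ₂) := by
  intro xr xs hxr hxs h₁ h₂
  have hnr : ‖xr‖ = √d := by rw [← hxr, sqrt_sq (norm_nonneg _)]
  have hns : ‖xs‖ = √d := by rw [← hxs, sqrt_sq (norm_nonneg _)]
  have hang₁ : angle xr w₁ ≤ θ₁ := hθ₁ ▸ hnr ▸ angle_le_arccos_of_le_inner h₁.le
  have hang₂ : angle xs w₂ ≤ θ₂ := hθ₂ ▸ hns ▸ angle_le_arccos_of_le_inner h₂.le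
  have hθ₁_nonneg : 0 ≤ θ₁ := hθ₁ ▸ arccos_nonneg _
  have hsep : 2 * max θ₁ θ₂ ≤ angle xr xs := by
    have := angle_le_angle_add_angle_add_angle w₁ w₂ xr xs
    linarith [le_max_left θ₁ θ₂, le_max_right θ₁ θ₂, max_lt hr₁ hr₂]
  calc inner ℝ xr xs ≤ ‖xr‖ * ‖xs‖ * cos (2 * max θ₁ θ₂) :=
        inner_le_norm_mul_norm_mul_cos_of_le_angle
          (by linarith [le_max_left θ₁ θ₂]) hsep
    _ = d * cos (2 * max θ₁ θ₂) := by rw [hnr, hns, mul_self_sqrt (Nat.cast_nonneg d)]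

theorem stmt_1 (d : ℕ) (hd : 0 < d) (w₁ w₂ : EuclideanSpace ℝ (Fin d))
    (hw₁ : w₁ ≠ 0) (hw₂ : w₂ ≠ 0)
    (kth₁ kth₂ : ℝ)
    (hk₁ : kth₁ ∈ Set.Ioo 0 (Real.sqrt d * ‖w₁‖))
    (hk₂ : kth₂ ∈ Set.Ioo 0 (Real.sqrt d * ‖w₂‖))
    (θ₁ θ₂ : ℝ)
    (hθ₁ : θ₁ = Real.arccos (kth₁ / (Real.sqrt d * ‖w₁‖)))
    (hθ₂ : θ₂ = Real.arccos (kth₂ / (Real.sqrt d * ‖w₂‖)))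
    (hr₁ : θ₁ < angle w₁ w₂ / 4) (hr₂ : θ₂ < angle w₁ w₂ / 4) :
    ∀ xr xs : EuclideanSpace ℝ (Fin d),
      ‖xr‖ ^ 2 = (d : ℝ) → ‖xs‖ ^ 2 = (d : ℝ) →
      kth₁ < (inner ℝ xr w₁ : ℝ) → kth₂ < (inner ℝ xs w₂ : ℝ) →
      (inner ℝ xr xs : ℝ) ≤ (d : ℝ) * Real.cos (2 * max θ₁ θ₂) :=
  stmt_1_general d w₁ w₂ kth₁ kth₂ θ₁ θ₂ hθ₁ hθ₂ hr₁ hr₂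
end

section
/- Let S ∈ ℝ^{c×d} be a matrix with rows S^1,…,S^c, and suppose every row has norm at least ε > 0. Then for all nonzero nonnegative vectors q, p ∈ ℝ^c, the cosine similarity of qS and pS (assumed nonzero) satisfies Cos(qS, pS) ≥ (ε²/‖S‖²)·min_{i,j} Cos(S^i, S^j), provided min_{i,j} Cos(S^i, S^j) ≥ 0, where ‖S‖ is the Frobenius (or operator) norm. -/
noncomputable section

def dotp {d : ℕ} (u v : Fin d → ℝ) : ℝ := ∑ i, u i * v i

def nrm {d : ℕ} (u : Fin d → ℝ) : ℝ := Real.sqrt (dotp u u)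

def cossim {d : ℕ} (u v : Fin d → ℝ) : ℝ := dotp u v / (nrm u * nrm v)

def rowMix {c d : ℕ} (q : Fin c → ℝ) (S : Fin c → Fin d → ℝ) : Fin d → ℝ :=
  fun j => ∑ i, q i * S i j

def frob {c d : ℕ} (S : Fin c → Fin d → ℝ) : ℝ :=
  Real.sqrt (∑ i, ∑ j, S i j ^ 2)

lemma dotp_self_nonneg {d : ℕ} (u : Fin d → ℝ) : 0 ≤ dotp u u :=
  Finset.sum_nonneg fun _ _ => mul_self_nonneg _

lemma nrm_nonneg {d : ℕ} (u : Fin d → ℝ) : 0 ≤ nrm u := Real.sqrt_nonneg _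

lemma nrm_sq {d : ℕ} (u : Fin d → ℝ) : nrm u ^ 2 = dotp u u :=
  Real.sq_sqrt (dotp_self_nonneg u)

lemma dotp_le {d : ℕ} (u v : Fin d → ℝ) : dotp u v ≤ nrm u * nrm v := by
  have h := Real.sum_mul_le_sqrt_mul_sqrt Finset.univ u v
  simpa [dotp, nrm, sq] using h

lemma nrm_pos {d : ℕ} (u : Fin d → ℝ) (hu : u ≠ 0) : 0 < nrm u := by
  have h : dotp u u ≠ 0 := by
    intro h
    apply hu
    funext i
    have := (Finset.sum_eq_zero_iff_of_nonneg
      (fun i _ => mul_self_nonneg (u i))).mp h i (Finset.mem_univ i)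
    simpa [mul_self_eq_zero] using this
  exact Real.sqrt_pos.mpr (lt_of_le_of_ne (dotp_self_nonneg u) (Ne.symm h))

lemma dotp_rowMix {c d : ℕ} (q p : Fin c → ℝ) (S : Fin c → Fin d → ℝ) :
    dotp (rowMix q S) (rowMix p S) = ∑ i, ∑ j, q i * p j * dotp (S i) (S j) := by
  simp only [dotp, rowMix, Finset.sum_mul, Finset.mul_sum]
  rw [Finset.sum_comm]
  rw [show (∑ y : Fin c, ∑ x : Fin d, ∑ i : Fin c, q i * S i x * (p y * S y x))
      = ∑ y : Fin c, ∑ i : Fin c, ∑ x : Fin d, q i * S i x * (p y * S y x) from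
    Finset.sum_congr rfl fun y _ => Finset.sum_comm]
  rw [Finset.sum_comm]
  exact Finset.sum_congr rfl fun i _ => Finset.sum_congr rfl fun j _ =>
    Finset.sum_congr rfl fun k _ => by ring

lemma nrm_le_frob {c d : ℕ} (S : Fin c → Fin d → ℝ) (i : Fin c) :
    nrm (S i) ≤ frob S := by
  unfold nrm frob
  apply Real.sqrt_le_sqrt
  have : dotp (S i) (S i) = ∑ j, S i j ^ 2 := by simp [dotp, sq]
  rw [this]
  exact Finset.single_le_sum (f := fun k => ∑ j, S k j ^ 2)
    (fun k _ => Finset.sum_nonneg fun j _ => sq_nonneg _) (Finset.mem_univ i)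

lemma sum_pos_of_ne_zero {c : ℕ} (q : Fin c → ℝ) (hq : q ≠ 0) (hq0 : ∀ i, 0 ≤ q i) :
    0 < ∑ i, q i := by
  have hnn : 0 ≤ ∑ i, q i := Finset.sum_nonneg fun i _ => hq0 i
  rcases hnn.lt_or_eq with h | h
  · exact h
  · exfalso
    apply hq
    funext i
    exact (Finset.sum_eq_zero_iff_of_nonneg (fun i _ => hq0 i)).mp h.symm i (Finset.mem_univ i)

lemma nrm_rowMix_le {c d : ℕ} (q : Fin c → ℝ) (S : Fin c → Fin d → ℝ)
    (hq0 : ∀ i, 0 ≤ q i) : nrm (rowMix q S) ≤ (∑ i, q i) * frob S := by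
  have hF : (0:ℝ) ≤ frob S := Real.sqrt_nonneg _
  have hbound : dotp (rowMix q S) (rowMix q S) ≤ ((∑ i, q i) * frob S) ^ 2 := by
    rw [dotp_rowMix]
    have : ((∑ i, q i) * frob S) ^ 2 = ∑ i, ∑ j, q i * q j * (frob S * frob S) := by
      simp only [← Finset.sum_mul]
      rw [← Finset.sum_mul_sum]
      ring
    rw [this]
    refine Finset.sum_le_sum fun i _ => Finset.sum_le_sum fun j _ => ?_
    have h1 : dotp (S i) (S j) ≤ frob S * frob S :=
      (dotp_le (S i) (S j)).trans
        (mul_le_mul (nrm_le_frob S i) (nrm_le_frob S j) (nrm_nonneg _) hF)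
    exact mul_le_mul_of_nonneg_left h1 (mul_nonneg (hq0 i) (hq0 j))
  calc nrm (rowMix q S) = Real.sqrt (dotp (rowMix q S) (rowMix q S)) := rfl
    _ ≤ Real.sqrt (((∑ i, q i) * frob S) ^ 2) := Real.sqrt_le_sqrt hbound
    _ = (∑ i, q i) * frob S := by
        rw [Real.sqrt_sq (mul_nonneg (Finset.sum_nonneg fun i _ => hq0 i) hF)]

theorem stmt_5 (c d : ℕ) [NeZero c] (S : Fin c → Fin d → ℝ) (ε : ℝ) (hε : 0 < ε)
    (hrow : ∀ i, ε ≤ nrm (S i))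
    (q p : Fin c → ℝ) (hq : q ≠ 0) (hp : p ≠ 0)
    (hq0 : ∀ i, 0 ≤ q i) (hp0 : ∀ i, 0 ≤ p i)
    (hqS : rowMix q S ≠ 0) (hpS : rowMix p S ≠ 0)
    (m : ℝ)
    (hm : m = Finset.univ.inf' (Finset.univ_nonempty)
      (fun ij : Fin c × Fin c => cossim (S ij.1) (S ij.2)))
    (hm0 : 0 ≤ m) :
    ε ^ 2 / frob S ^ 2 * m ≤ cossim (rowMix q S) (rowMix p S) := by
  have hrowpos : ∀ i, 0 < nrm (S i) := fun i => lt_of_lt_of_le hε (hrow i)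
  -- m lower bounds each cossim, hence dotp (S i) (S j) ≥ m * nrm * nrm ≥ m * ε²
  have hdot_ge : ∀ i j : Fin c, m * ε ^ 2 ≤ dotp (S i) (S j) := by
    intro i j
    have hmle : m ≤ cossim (S i) (S j) := by
      rw [hm]
      exact Finset.inf'_le _ (Finset.mem_univ (i, j))
    have hprod : 0 < nrm (S i) * nrm (S j) := mul_pos (hrowpos i) (hrowpos j)
    have h1 : m * (nrm (S i) * nrm (S j)) ≤ dotp (S i) (S j) := by
      have := mul_le_mul_of_nonneg_right hmle hprod.le
      rwa [cossim, div_mul_cancel₀ _ hprod.ne'] at this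
    refine le_trans ?_ h1
    have hεε : ε ^ 2 ≤ nrm (S i) * nrm (S j) := by
      rw [sq]
      exact mul_le_mul (hrow i) (hrow j) hε.le (nrm_nonneg _)
    exact mul_le_mul_of_nonneg_left hεε hm0
  have hQ : 0 < ∑ i, q i := sum_pos_of_ne_zero q hq hq0
  have hP : 0 < ∑ i, p i := sum_pos_of_ne_zero p hp hp0
  have hF : 0 < frob S := lt_of_lt_of_le hε ((hrow 0).trans (nrm_le_frob S 0))
  -- lower bound on inner product
  have hlow : m * ε ^ 2 * ((∑ i, q i) * (∑ j, p j)) ≤ dotp (rowMix q S) (rowMix p S) := by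
    rw [dotp_rowMix]
    have : m * ε ^ 2 * ((∑ i, q i) * (∑ j, p j)) = ∑ i, ∑ j, q i * p j * (m * ε ^ 2) := by
      rw [Finset.sum_mul_sum]
      rw [Finset.mul_sum]
      refine Finset.sum_congr rfl fun i _ => ?_
      rw [Finset.mul_sum]
      refine Finset.sum_congr rfl fun j _ => by ring
    rw [this]
    exact Finset.sum_le_sum fun i _ => Finset.sum_le_sum fun j _ =>
      mul_le_mul_of_nonneg_left (hdot_ge i j) (mul_nonneg (hq0 i) (hp0 j))
  have hNq : 0 < nrm (rowMix q S) := nrm_pos _ hqS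
  have hNp : 0 < nrm (rowMix p S) := nrm_pos _ hpS
  have hNqP : 0 < nrm (rowMix q S) * nrm (rowMix p S) := mul_pos hNq hNp
  rw [cossim, le_div_iff₀ hNqP]
  have hK : 0 ≤ ε ^ 2 / frob S ^ 2 * m :=
    mul_nonneg (div_nonneg (sq_nonneg _) (sq_nonneg _)) hm0
  calc ε ^ 2 / frob S ^ 2 * m * (nrm (rowMix q S) * nrm (rowMix p S))
      ≤ ε ^ 2 / frob S ^ 2 * m * (((∑ i, q i) * frob S) * ((∑ i, p i) * frob S)) := by
        refine mul_le_mul_of_nonneg_left ?_ hK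
        exact mul_le_mul (nrm_rowMix_le q S hq0) (nrm_rowMix_le p S hp0)
          hNp.le (mul_nonneg hQ.le hF.le)
    _ = m * ε ^ 2 * ((∑ i, q i) * (∑ j, p j)) := by
        field_simp
    _ ≤ dotp (rowMix q S) (rowMix p S) := hlow
end
end
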